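/- For n ≥ 2, the monoid of injective endomorphisms of I_ω^n(conv) under composition is isomorphic to the additive monoid (ω, +). -/

import Mathlib

/-- A nonzero element of `I_ω^n(conv)`: the partial order isomorphism with domain
`{i, …, i+k-1}` and range `{j, …, j+k-1}` (mapping `t ↦ t - i + j`), where `1 ≤ k ≤ n`. -/
structure ConvEl (n : ℕ) where
  i : ℕ
  j : ℕ
  k : ℕ
  k_pos : 1 ≤ k
  k_le : k ≤ n

/-- The inverse semigroup `I_ω^n(conv)` of partial order isomorphisms between order-convex
subsets of `(ω, ≤)` of cardinality at most `n`; `none` is the zero (the empty map). -/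
abbrev ConvSgp (n : ℕ) := Option (ConvEl n)

/-- Composition of partial maps (`x` applied first, then `y`) in `I_ω^n(conv)`. -/
def cmul {n : ℕ} : ConvSgp n → ConvSgp n → ConvSgp n
  | some x, some y =>
    if h : max x.j y.i < min (x.j + x.k) (y.i + y.k) then
      some { i := max x.j y.i - x.j + x.i
             j := max x.j y.i - y.i + y.j
             k := min (x.j + x.k) (y.i + y.k) - max x.j y.i
             k_pos := by omega
             k_le := by have hx := x.k_le; omega }
    else none
  | _, _ => none

/-- The monoid of injective endomorphisms of `I_ω^n(conv)` under composition. -/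
def InjEndConv (n : ℕ) :=
  {f : ConvSgp n → ConvSgp n //
    Function.Injective f ∧ ∀ x y : ConvSgp n, f (cmul x y) = cmul (f x) (f y)}

instance (n : ℕ) : Monoid (InjEndConv n) where
  mul f g := ⟨f.1 ∘ g.1, f.2.1.comp g.2.1, fun x y => by
    simp only [Function.comp_apply, g.2.2, f.2.2]⟩
  one := ⟨id, fun a b h => h, fun x y => rfl⟩
  mul_assoc f g h := rfl
  one_mul f := rfl
  mul_one f := rfl
section Aux

variable {n : ℕ}

theorem ConvEl.ext' {x y : ConvEl n} (h1 : x.i = y.i) (h2 : x.j = y.j)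
    (h3 : x.k = y.k) : x = y := by
  cases x; cases y; simp_all

@[simp] theorem cmul_none_left (y : ConvSgp n) : cmul none y = none := by
  cases y <;> rfl

@[simp] theorem cmul_none_right (x : ConvSgp n) : cmul x none = none := by
  cases x <;> rfl

theorem cmul_some_some (x y : ConvEl n) :
    cmul (some x) (some y) =
      if h : max x.j y.i < min (x.j + x.k) (y.i + y.k) then
        some ⟨max x.j y.i - x.j + x.i, max x.j y.i - y.i + y.j,
              min (x.j + x.k) (y.i + y.k) - max x.j y.i, by omega,
              by have := x.k_le; omega⟩
      else none := rfl

theorem cmul_eq_some_iff {x y z : ConvEl n} :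
    cmul (some x) (some y) = some z ↔
      (max x.j y.i < min (x.j + x.k) (y.i + y.k) ∧
       z.i = max x.j y.i - x.j + x.i ∧
       z.j = max x.j y.i - y.i + y.j ∧
       z.k = min (x.j + x.k) (y.i + y.k) - max x.j y.i) := by
  by_cases h : max x.j y.i < min (x.j + x.k) (y.i + y.k)
  · rw [cmul_some_some, dif_pos h]
    simp only [Option.some.injEq]
    constructor
    · rintro rfl; exact ⟨h, rfl, rfl, rfl⟩
    · rintro ⟨-, h1, h2, h3⟩; exact (ConvEl.ext' h1 h2 h3).symm
  · rw [cmul_some_some, dif_neg h]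
    exact iff_of_false (by simp) (fun hc => h hc.1)

theorem cmul_eq_none_iff {x y : ConvEl n} :
    cmul (some x) (some y) = none ↔
      min (x.j + x.k) (y.i + y.k) ≤ max x.j y.i := by
  by_cases h : max x.j y.i < min (x.j + x.k) (y.i + y.k)
  · rw [cmul_some_some, dif_pos h]
    exact iff_of_false (by simp) (by omega)
  · rw [cmul_some_some, dif_neg h]
    exact iff_of_true rfl (by omega)

/-- The shift of a nonzero element by `c`. -/
def shiftEl (c : ℕ) (x : ConvEl n) : ConvEl n :=
  ⟨x.i + c, x.j + c, x.k, x.k_pos, x.k_le⟩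

@[simp] theorem shiftEl_i (c : ℕ) (x : ConvEl n) : (shiftEl c x).i = x.i + c := rfl
@[simp] theorem shiftEl_j (c : ℕ) (x : ConvEl n) : (shiftEl c x).j = x.j + c := rfl
@[simp] theorem shiftEl_k (c : ℕ) (x : ConvEl n) : (shiftEl c x).k = x.k := rfl

/-- The shift endomorphism of `I_ω^n(conv)`. -/
def shiftFun (c : ℕ) : ConvSgp n → ConvSgp n := Option.map (shiftEl c)

@[simp] theorem shiftFun_none (c : ℕ) : shiftFun (n := n) c none = none := rfl
@[simp] theorem shiftFun_some (c : ℕ) (x : ConvEl n) :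
    shiftFun c (some x) = some (shiftEl c x) := rfl

theorem shiftFun_inj (c : ℕ) : Function.Injective (shiftFun (n := n) c) := by
  intro x y hxy
  cases x with
  | none => cases y with
    | none => rfl
    | some y => simp at hxy
  | some x => cases y with
    | none => simp at hxy
    | some y =>
      simp only [shiftFun_some, Option.some.injEq] at hxy
      have h1 := congrArg ConvEl.i hxy
      have h2 := congrArg ConvEl.j hxy
      have h3 := congrArg ConvEl.k hxy
      simp only [shiftEl_i, shiftEl_j, shiftEl_k] at h1 h2 h3
      exact congrArg some (ConvEl.ext' (by omega) (by omega) h3)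

theorem shiftFun_mul (c : ℕ) (x y : ConvSgp n) :
    shiftFun c (cmul x y) = cmul (shiftFun c x) (shiftFun c y) := by
  cases x with
  | none => simp
  | some x => cases y with
    | none => simp
    | some y =>
      rw [shiftFun_some, shiftFun_some, cmul_some_some, cmul_some_some]
      by_cases h : max x.j y.i < min (x.j + x.k) (y.i + y.k)
      · rw [dif_pos h, dif_pos (by simp only [shiftEl_i, shiftEl_j, shiftEl_k]; omega),
          shiftFun_some]
        refine congrArg some (ConvEl.ext' ?_ ?_ ?_) <;>
          simp only [shiftEl_i, shiftEl_j, shiftEl_k] <;> omega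
      · rw [dif_neg h, dif_neg (by simp only [shiftEl_i, shiftEl_j, shiftEl_k]; omega)]
        rfl

/-- Atomic idempotent: identity on `{a}`. -/
def epsEl (n : ℕ) (hn : 1 ≤ n) (a : ℕ) : ConvEl n := ⟨a, a, 1, le_refl 1, hn⟩

/-- Maximal idempotent: identity on `{a, …, a+n-1}`. -/
def enEl (n : ℕ) (hn : 1 ≤ n) (a : ℕ) : ConvEl n := ⟨a, a, n, hn, le_refl n⟩

@[simp] theorem epsEl_i (hn : 1 ≤ n) (a : ℕ) : (epsEl n hn a).i = a := rfl
@[simp] theorem epsEl_j (hn : 1 ≤ n) (a : ℕ) : (epsEl n hn a).j = a := rfl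
@[simp] theorem epsEl_k (hn : 1 ≤ n) (a : ℕ) : (epsEl n hn a).k = 1 := rfl
@[simp] theorem enEl_i (hn : 1 ≤ n) (a : ℕ) : (enEl n hn a).i = a := rfl
@[simp] theorem enEl_j (hn : 1 ≤ n) (a : ℕ) : (enEl n hn a).j = a := rfl
@[simp] theorem enEl_k (hn : 1 ≤ n) (a : ℕ) : (enEl n hn a).k = n := rfl

end Aux
@[simp] theorem ConvEl.mk_i {n : ℕ} (i j k : ℕ) (h1 : 1 ≤ k) (h2 : k ≤ n) :
    (ConvEl.mk i j k h1 h2).i = i := rfl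
@[simp] theorem ConvEl.mk_j {n : ℕ} (i j k : ℕ) (h1 : 1 ≤ k) (h2 : k ≤ n) :
    (ConvEl.mk i j k h1 h2).j = j := rfl
@[simp] theorem ConvEl.mk_k {n : ℕ} (i j k : ℕ) (h1 : 1 ≤ k) (h2 : k ≤ n) :
    (ConvEl.mk i j k h1 h2).k = k := rfl
/-- Combinatorial core: if `g a` (with multiplicity `m a`) are pairwise disjoint intervals
contained in windows `[hh a, hh a + ll a)` of length `ll a ≤ n`, then everything is a shift. -/
theorem window_lemma (n : ℕ) (hn : 2 ≤ n) (g m hh ll : ℕ → ℕ)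
    (hm1 : ∀ a, 1 ≤ m a) (hln : ∀ a, ll a ≤ n)
    (F1 : ∀ a t, t < n → hh a ≤ g (a + t) ∧ g (a + t) + m (a + t) ≤ hh a + ll a)
    (F2 : ∀ a b, a ≠ b → min (g a + m a) (g b + m b) ≤ max (g a) (g b)) :
    ∀ a, g a = g 0 + a ∧ m a = 1 ∧ hh a = g 0 + a ∧ ll a = n := by
  have ginj : ∀ a b, g a = g b → a = b := by
    intro a b hab
    by_contra hne
    have h1 := F2 a b hne
    have h2 := hm1 a; have h3 := hm1 b
    omega
  have hScard : ∀ a, ((Finset.range n).image fun t => g (a + t)).card = n := by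
    intro a
    rw [Finset.card_image_of_injective _ (fun s t hst => by
      have := ginj _ _ hst; omega), Finset.card_range]
  have hSsub : ∀ a, ((Finset.range n).image fun t => g (a + t)) ⊆
      Finset.Ico (hh a) (hh a + ll a) := by
    intro a x hx
    simp only [Finset.mem_image, Finset.mem_range] at hx
    obtain ⟨t, ht, rfl⟩ := hx
    have h1 := F1 a t ht
    have h2 := hm1 (a + t)
    simp only [Finset.mem_Ico]
    omega
  have hlln : ∀ a, ll a = n := by
    intro a
    have h1 := Finset.card_le_card (hSsub a)
    rw [hScard a, Nat.card_Ico] at h1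
    have := hln a; omega
  have hSeq : ∀ a, ((Finset.range n).image fun t => g (a + t)) =
      Finset.Ico (hh a) (hh a + n) := by
    intro a
    refine Finset.eq_of_subset_of_card_le ?_ ?_
    · have h := hSsub a; rwa [hlln a] at h
    · rw [Nat.card_Ico, hScard]; omega
  have hmem : ∀ a x, x ∈ Finset.Ico (hh a) (hh a + n) → ∃ t, t < n ∧ g (a + t) = x := by
    intro a x hx
    rw [← hSeq a] at hx
    simp only [Finset.mem_image, Finset.mem_range] at hx
    obtain ⟨t, ht, h⟩ := hx; exact ⟨t, ht, h⟩
  have hgmem : ∀ a t, t < n → hh a ≤ g (a + t) ∧ g (a + t) < hh a + n := by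
    intro a t ht
    have h1 := F1 a t ht; have h2 := hm1 (a + t); have h3 := hlln a; omega
  have hm : ∀ a, m a = 1 := by
    intro a
    by_contra hma
    have hma2 : 2 ≤ m a := by have := hm1 a; omega
    have h1 := F1 a 0 (by omega)
    simp only [Nat.add_zero] at h1
    have hmm : g a + 1 ∈ Finset.Ico (hh a) (hh a + n) := by
      simp only [Finset.mem_Ico]
      have := hlln a; omega
    obtain ⟨t, ht, hgt⟩ := hmem a _ hmm
    have htne : a + t ≠ a := by
      intro h; rw [h] at hgt; omega
    have h2 := F2 a (a + t) (fun h => htne h.symm)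
    have h3 := hm1 (a + t)
    omega
  have honly : ∀ a x, x ∈ Finset.Ico (hh a) (hh a + n) →
      x ∉ Finset.Ico (hh (a + 1)) (hh (a + 1) + n) → x = g a := by
    intro a x hx hx'
    obtain ⟨t, ht, hgt⟩ := hmem a x hx
    rcases Nat.eq_zero_or_pos t with rfl | htp
    · simpa using hgt.symm
    · exfalso
      apply hx'
      have he : a + t = (a + 1) + (t - 1) := by omega
      rw [he] at hgt
      rw [← hgt]
      have := hgmem (a + 1) (t - 1) (by omega)
      simp only [Finset.mem_Ico]; omega
  have honly2 : ∀ a x, x ∈ Finset.Ico (hh (a + 1)) (hh (a + 1) + n) →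
      x ∉ Finset.Ico (hh a) (hh a + n) → x = g (a + n) := by
    intro a x hx hx'
    obtain ⟨t, ht, hgt⟩ := hmem (a + 1) x hx
    rcases Nat.lt_or_ge t (n - 1) with htl | htg
    · exfalso; apply hx'
      have he : a + 1 + t = a + (t + 1) := by omega
      rw [he] at hgt
      rw [← hgt]
      have := hgmem a (t + 1) (by omega)
      simp only [Finset.mem_Ico]; omega
    · have he : a + 1 + t = a + n := by omega
      rw [he] at hgt; exact hgt.symm
  have hstep : ∀ a, hh (a + 1) = hh a + 1 ∨ hh a = hh (a + 1) + 1 := by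
    intro a
    by_contra hcon
    push_neg at hcon
    obtain ⟨hc1, hc2⟩ := hcon
    rcases Nat.lt_trichotomy (hh (a + 1)) (hh a) with hlt | heq | hgt
    · have h2 : hh (a + 1) + 2 ≤ hh a := by omega
      have e1 : hh (a + 1) = g (a + n) := honly2 a _
        (by simp only [Finset.mem_Ico]; omega) (by simp only [Finset.mem_Ico]; omega)
      have e2 : hh (a + 1) + 1 = g (a + n) := honly2 a _
        (by simp only [Finset.mem_Ico]; omega) (by simp only [Finset.mem_Ico]; omega)
      omega
    · have hga := hgmem a 0 (by omega)
      simp only [Nat.add_zero] at hga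
      obtain ⟨t, ht, hgt⟩ := hmem (a + 1) (g a)
        (by simp only [Finset.mem_Ico]; omega)
      have := ginj _ _ hgt
      omega
    · have h2 : hh a + 2 ≤ hh (a + 1) := by omega
      have e1 : hh a = g a := honly a _
        (by simp only [Finset.mem_Ico]; omega) (by simp only [Finset.mem_Ico]; omega)
      have e2 : hh a + 1 = g a := honly a _
        (by simp only [Finset.mem_Ico]; omega) (by simp only [Finset.mem_Ico]; omega)
      omega
  have hhinj : ∀ a b, hh a = hh b → a = b := by
    have key : ∀ a b, a < b → hh a ≠ hh b := by
      intro a b hab he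
      have hga := hgmem a 0 (by omega)
      simp only [Nat.add_zero] at hga
      obtain ⟨t, ht, hgt⟩ := hmem b (g a) (by simp only [Finset.mem_Ico]; omega)
      have := ginj _ _ hgt
      omega
    intro a b he
    rcases Nat.lt_trichotomy a b with h | h | h
    · exact absurd he (key a b h)
    · exact h
    · exact absurd he.symm (key b a h)
  have hup : ∀ a, hh (a + 1) = hh a + 1 := by
    by_contra hcon
    push_neg at hcon
    obtain ⟨a, ha⟩ := hcon
    have hdown : hh a = hh (a + 1) + 1 := (hstep a).resolve_left ha
    have down : ∀ s, hh (a + s + 1) + 1 = hh (a + s) := by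
      intro s
      induction s with
      | zero => exact hdown.symm
      | succ s ih =>
        show hh (a + s + 1 + 1) + 1 = hh (a + s + 1)
        rcases hstep (a + s + 1) with h | h
        · exfalso
          have he : hh (a + s + 1 + 1) = hh (a + s) := by omega
          have := hhinj _ _ he
          omega
        · omega
    have total : ∀ s, hh (a + s) + s = hh a := by
      intro s
      induction s with
      | zero => rfl
      | succ s ih =>
        show hh (a + s + 1) + (s + 1) = hh a
        have := down s
        omega
    have := total (hh a + 1)
    omega
  have hlin : ∀ a, hh a = hh 0 + a := by
    intro a
    induction a with
    | zero => rfl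
    | succ a ih =>
      show hh (a + 1) = hh 0 + (a + 1)
      rw [hup a]; omega
  have hga : ∀ a, g a = hh a := by
    intro a
    have h0 := hgmem a 0 (by omega)
    simp only [Nat.add_zero] at h0
    have hnot : g a ∉ Finset.Ico (hh (a + 1)) (hh (a + 1) + n) := by
      intro hmem'
      obtain ⟨t, ht, hgt⟩ := hmem (a + 1) _ hmem'
      have := ginj _ _ hgt
      omega
    simp only [Finset.mem_Ico, not_and, not_lt] at hnot
    rcases Nat.lt_or_ge (g a) (hh (a + 1)) with h | h
    · have := hup a; omega
    · have := hnot h; have := hup a; omega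
  intro a
  have h1 := hga a; have h2 := hga 0; have h3 := hlin a
  have h4 := hm a; have h5 := hlln a
  omega
/-- Every injective endomorphism of `I_ω^n(conv)` (for `n ≥ 2`) is a shift. -/
theorem classify_endo {n : ℕ} (hn : 2 ≤ n) (f : ConvSgp n → ConvSgp n)
    (hinj : Function.Injective f)
    (hmul : ∀ x y, f (cmul x y) = cmul (f x) (f y)) :
    ∃ c, f = shiftFun c := by
  have h1n : 1 ≤ n := by omega
  -- Step 1: f preserves zero
  have hz : f none = none := by
    by_contra hne
    obtain ⟨z, hzz⟩ := Option.ne_none_iff_exists'.mp hne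
    have hzfix : ∀ x : ConvSgp n, cmul (f x) (some z) = some z := by
      intro x
      have h := hmul x none
      rw [cmul_none_right, hzz] at h
      exact h.symm
    have key : ∀ a : ℕ, ∃ w : ConvEl n, f (some (epsEl n h1n a)) = some w ∧
        w.i = w.j ∧ w.j ≤ z.i := by
      intro a
      have hx := hzfix (some (epsEl n h1n a))
      cases hw : f (some (epsEl n h1n a)) with
      | none => rw [hw, cmul_none_left] at hx; exact absurd hx (by simp)
      | some w =>
        rw [hw, cmul_eq_some_iff] at hx
        exact ⟨w, rfl, by omega, by omega⟩
    choose w hw hwij hwle using key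
    obtain ⟨a, b, hab, heq⟩ := Finite.exists_ne_map_eq_of_infinite
      (fun a : ℕ => ((⟨(w a).j, by have := hwle a; omega⟩ : Fin (z.i + 1)),
        (⟨(w a).k, by have := (w a).k_le; omega⟩ : Fin (n + 1))))
    have h1 : (w a).j = (w b).j := congrArg (fun p => (Prod.fst p).val) heq
    have h2 : (w a).k = (w b).k := congrArg (fun p => (Prod.snd p).val) heq
    have h3 : w a = w b := ConvEl.ext' (by rw [hwij a, hwij b, h1]) h1 h2
    have h4 := hinj ((hw a).trans (by rw [h3, ← hw b]))
    simp only [Option.some.injEq] at h4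
    exact hab (congrArg ConvEl.i h4)
  -- The induced map on nonzero elements
  have hsome : ∀ x : ConvEl n, ∃ y, f (some x) = some y := by
    intro x
    cases hx : f (some x) with
    | none => exact absurd (hinj (hx.trans hz.symm)) (by simp)
    | some y => exact ⟨y, rfl⟩
  choose F hF using hsome
  have H1 : ∀ x y z : ConvEl n, cmul (some x) (some y) = some z →
      cmul (some (F x)) (some (F y)) = some (F z) := by
    intro x y z hxyz
    have h := hmul (some x) (some y)
    rw [hxyz, hF, hF, hF] at h
    exact h.symm
  have H0 : ∀ x y : ConvEl n, cmul (some x) (some y) = none →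
      cmul (some (F x)) (some (F y)) = none := by
    intro x y hxy
    have h := hmul (some x) (some y)
    rw [hxy, hz, hF, hF] at h
    exact h.symm
  have Hid : ∀ x : ConvEl n, x.i = x.j → (F x).i = (F x).j := by
    intro x hx
    have h1 : cmul (some x) (some x) = some x := by
      rw [cmul_eq_some_iff]
      have := x.k_pos; omega
    have h2 := H1 x x x h1
    rw [cmul_eq_some_iff] at h2
    omega
  -- Step 2: the action on idempotents is a shift
  obtain ⟨c, hEps, hEn0⟩ : ∃ c, (∀ a, F (epsEl n h1n a) = epsEl n h1n (a + c)) ∧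
      F (enEl n h1n 0) = enEl n h1n c := by
    have HF1 : ∀ a t, t < n → (F (enEl n h1n a)).i ≤ (F (epsEl n h1n (a + t))).i ∧
        (F (epsEl n h1n (a + t))).i + (F (epsEl n h1n (a + t))).k ≤
          (F (enEl n h1n a)).i + (F (enEl n h1n a)).k := by
      intro a t ht
      have hc : cmul (some (enEl n h1n a)) (some (epsEl n h1n (a + t))) =
          some (epsEl n h1n (a + t)) := by
        rw [cmul_eq_some_iff]
        simp only [enEl_i, enEl_j, enEl_k, epsEl_i, epsEl_j, epsEl_k]
        omega
      have h2 := H1 _ _ _ hc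
      rw [cmul_eq_some_iff] at h2
      have hj1 := Hid (enEl n h1n a) rfl
      have hj2 := Hid (epsEl n h1n (a + t)) rfl
      omega
    have HF2 : ∀ a b, a ≠ b →
        min ((F (epsEl n h1n a)).i + (F (epsEl n h1n a)).k)
          ((F (epsEl n h1n b)).i + (F (epsEl n h1n b)).k) ≤
        max (F (epsEl n h1n a)).i (F (epsEl n h1n b)).i := by
      intro a b hab
      have hc : cmul (some (epsEl n h1n a)) (some (epsEl n h1n b)) = none := by
        rw [cmul_eq_none_iff]
        simp only [epsEl_i, epsEl_j, epsEl_k]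
        omega
      have h2 := H0 _ _ hc
      rw [cmul_eq_none_iff] at h2
      have hj1 := Hid (epsEl n h1n a) rfl
      have hj2 := Hid (epsEl n h1n b) rfl
      omega
    have W := window_lemma n hn (fun a => (F (epsEl n h1n a)).i)
      (fun a => (F (epsEl n h1n a)).k) (fun a => (F (enEl n h1n a)).i)
      (fun a => (F (enEl n h1n a)).k)
      (fun a => (F (epsEl n h1n a)).k_pos) (fun a => (F (enEl n h1n a)).k_le)
      HF1 HF2
    refine ⟨(F (epsEl n h1n 0)).i, fun a => ?_, ?_⟩
    · obtain ⟨w1, w2, w3, w4⟩ := W a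
      have w1' : (F (epsEl n h1n a)).i = (F (epsEl n h1n 0)).i + a := w1
      have w2' : (F (epsEl n h1n a)).k = 1 := w2
      have hj := Hid (epsEl n h1n a) rfl
      refine ConvEl.ext' ?_ ?_ ?_
      · show (F (epsEl n h1n a)).i = a + (F (epsEl n h1n 0)).i
        omega
      · show (F (epsEl n h1n a)).j = a + (F (epsEl n h1n 0)).i
        omega
      · show (F (epsEl n h1n a)).k = 1
        omega
    · obtain ⟨w1, w2, w3, w4⟩ := W 0
      have w3' : (F (enEl n h1n 0)).i = (F (epsEl n h1n 0)).i + 0 := w3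
      have w4' : (F (enEl n h1n 0)).k = n := w4
      have hj := Hid (enEl n h1n 0) rfl
      refine ConvEl.ext' ?_ ?_ ?_
      · show (F (enEl n h1n 0)).i = (F (epsEl n h1n 0)).i
        omega
      · show (F (enEl n h1n 0)).j = (F (epsEl n h1n 0)).i
        omega
      · show (F (enEl n h1n 0)).k = n
        omega
  -- Step 3: rank-one elements
  have hR1 : ∀ x : ConvEl n, x.k = 1 →
      F x = ⟨x.i + c, x.j + c, 1, le_refl 1, h1n⟩ := by
    intro x hxk
    have hcl : cmul (some (epsEl n h1n x.i)) (some x) = some x := by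
      rw [cmul_eq_some_iff]
      simp only [epsEl_i, epsEl_j, epsEl_k]
      omega
    have h2 := H1 _ _ _ hcl
    rw [hEps x.i, cmul_eq_some_iff] at h2
    simp only [epsEl_i, epsEl_j, epsEl_k] at h2
    have hcr : cmul (some x) (some (epsEl n h1n x.j)) = some x := by
      rw [cmul_eq_some_iff]
      simp only [epsEl_i, epsEl_j, epsEl_k]
      omega
    have h3 := H1 _ _ _ hcr
    rw [hEps x.j, cmul_eq_some_iff] at h3
    simp only [epsEl_i, epsEl_j, epsEl_k] at h3
    have hkp := (F x).k_pos
    refine ConvEl.ext' ?_ ?_ ?_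
    · show (F x).i = x.i + c
      omega
    · show (F x).j = x.j + c
      omega
    · show (F x).k = 1
      omega
  -- Step 4: all elements
  have main : ∀ x : ConvEl n, F x = shiftEl c x := by
    intro x
    obtain ⟨i, j, k, hk1, hkn⟩ := x
    have Lin : ∀ a, i ≤ a → a < i + k →
        (F ⟨i, j, k, hk1, hkn⟩).i ≤ a + c ∧
        a + c < (F ⟨i, j, k, hk1, hkn⟩).i + (F ⟨i, j, k, hk1, hkn⟩).k ∧
        a + c - (F ⟨i, j, k, hk1, hkn⟩).i + (F ⟨i, j, k, hk1, hkn⟩).j = a - i + j + c := by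
      intro a ha1 ha2
      have hprod : cmul (some (epsEl n h1n a)) (some ⟨i, j, k, hk1, hkn⟩) =
          some ⟨a, a - i + j, 1, le_refl 1, h1n⟩ := by
        rw [cmul_eq_some_iff]
        simp only [epsEl_i, epsEl_j, epsEl_k, ConvEl.mk_i, ConvEl.mk_j, ConvEl.mk_k]
        omega
      have h2 := H1 _ _ _ hprod
      rw [hEps a, hR1 ⟨a, a - i + j, 1, le_refl 1, h1n⟩ rfl, cmul_eq_some_iff] at h2
      simp only [epsEl_i, epsEl_j, epsEl_k, ConvEl.mk_i, ConvEl.mk_j, ConvEl.mk_k] at h2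
      omega
    have Lout : ∀ a, (a < i ∨ i + k ≤ a) →
        ¬((F ⟨i, j, k, hk1, hkn⟩).i ≤ a + c ∧
          a + c < (F ⟨i, j, k, hk1, hkn⟩).i + (F ⟨i, j, k, hk1, hkn⟩).k) := by
      intro a ha
      have hprod : cmul (some (epsEl n h1n a)) (some ⟨i, j, k, hk1, hkn⟩) = none := by
        rw [cmul_eq_none_iff]
        simp only [epsEl_i, epsEl_j, epsEl_k, ConvEl.mk_i, ConvEl.mk_j, ConvEl.mk_k]
        omega
      have h2 := H0 _ _ hprod
      rw [hEps a, cmul_eq_none_iff] at h2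
      simp only [epsEl_i, epsEl_j, epsEl_k] at h2
      omega
    have Rin : ∀ b, j ≤ b → b < j + k →
        (F ⟨i, j, k, hk1, hkn⟩).j ≤ b + c ∧
        b + c < (F ⟨i, j, k, hk1, hkn⟩).j + (F ⟨i, j, k, hk1, hkn⟩).k ∧
        b + c - (F ⟨i, j, k, hk1, hkn⟩).j + (F ⟨i, j, k, hk1, hkn⟩).i = b - j + i + c := by
      intro b hb1 hb2
      have hprod : cmul (some ⟨i, j, k, hk1, hkn⟩) (some (epsEl n h1n b)) =
          some ⟨b - j + i, b, 1, le_refl 1, h1n⟩ := by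
        rw [cmul_eq_some_iff]
        simp only [epsEl_i, epsEl_j, epsEl_k, ConvEl.mk_i, ConvEl.mk_j, ConvEl.mk_k]
        omega
      have h2 := H1 _ _ _ hprod
      rw [hEps b, hR1 ⟨b - j + i, b, 1, le_refl 1, h1n⟩ rfl, cmul_eq_some_iff] at h2
      simp only [epsEl_i, epsEl_j, epsEl_k, ConvEl.mk_i, ConvEl.mk_j, ConvEl.mk_k] at h2
      omega
    have Rout : ∀ b, (b < j ∨ j + k ≤ b) →
        ¬((F ⟨i, j, k, hk1, hkn⟩).j ≤ b + c ∧
          b + c < (F ⟨i, j, k, hk1, hkn⟩).j + (F ⟨i, j, k, hk1, hkn⟩).k) := by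
      intro b hb
      have hprod : cmul (some ⟨i, j, k, hk1, hkn⟩) (some (epsEl n h1n b)) = none := by
        rw [cmul_eq_none_iff]
        simp only [epsEl_i, epsEl_j, epsEl_k, ConvEl.mk_i, ConvEl.mk_j, ConvEl.mk_k]
        omega
      have h2 := H0 _ _ hprod
      rw [hEps b, cmul_eq_none_iff] at h2
      simp only [epsEl_i, epsEl_j, epsEl_k] at h2
      omega
    have N : i = 0 → j = 0 → c ≤ (F ⟨i, j, k, hk1, hkn⟩).i := by
      intro hi0 hj0
      have hprod : cmul (some (enEl n h1n 0)) (some ⟨i, j, k, hk1, hkn⟩) =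
          some ⟨i, j, k, hk1, hkn⟩ := by
        rw [cmul_eq_some_iff]
        simp only [enEl_i, enEl_j, enEl_k, ConvEl.mk_i, ConvEl.mk_j, ConvEl.mk_k]
        omega
      have h2 := H1 _ _ _ hprod
      rw [hEn0, cmul_eq_some_iff] at h2
      simp only [enEl_i, enEl_j, enEl_k] at h2
      omega
    have L1 := Lin i (le_refl i) (by omega)
    have L2 := Lin (i + k - 1) (by omega) (by omega)
    have L3 := Lout (i + k) (by omega)
    have R1 := Rin j (le_refl j) (by omega)
    have R2 := Rin (j + k - 1) (by omega) (by omega)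
    have R3 := Rout (j + k) (by omega)
    refine ConvEl.ext' ?_ ?_ ?_ <;>
      simp only [shiftEl_i, shiftEl_j, shiftEl_k, ConvEl.mk_i, ConvEl.mk_j, ConvEl.mk_k] <;>
      rcases Nat.eq_zero_or_pos i with hi0 | hip
    case _ =>
      rcases Nat.eq_zero_or_pos j with hj0 | hjp
      · have hN := N hi0 hj0; omega
      · have R4 := Rout (j - 1) (by omega); omega
    case _ => have L4 := Lout (i - 1) (by omega); omega
    case _ =>
      rcases Nat.eq_zero_or_pos j with hj0 | hjp
      · have hN := N hi0 hj0; omega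
      · have R4 := Rout (j - 1) (by omega); omega
    case _ => have L4 := Lout (i - 1) (by omega); omega
    case _ =>
      rcases Nat.eq_zero_or_pos j with hj0 | hjp
      · have hN := N hi0 hj0; omega
      · have R4 := Rout (j - 1) (by omega); omega
    case _ => have L4 := Lout (i - 1) (by omega); omega
  refine ⟨c, funext fun x => ?_⟩
  cases x with
  | none => exact hz
  | some v => rw [hF v, main v]; rfl
/-- The shift endomorphism as an element of `InjEndConv n`. -/
def shiftEndo (n : ℕ) (c : ℕ) : InjEndConv n :=
  ⟨shiftFun c, shiftFun_inj c, fun x y => shiftFun_mul c x y⟩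

/-- The monoid homomorphism `(ω, +) → InjEndConv n` sending `c` to the shift by `c`. -/
def shiftHom (n : ℕ) : Multiplicative ℕ →* InjEndConv n where
  toFun m := shiftEndo n (Multiplicative.toAdd m)
  map_one' := Subtype.ext (funext fun x => by
    cases x with
    | none => rfl
    | some v =>
      show some (shiftEl 0 v) = some v
      exact congrArg some (ConvEl.ext' (by simp) (by simp) rfl))
  map_mul' a b := Subtype.ext (funext fun x => by
    cases x with
    | none => rfl
    | some v =>
      show some (shiftEl (Multiplicative.toAdd a + Multiplicative.toAdd b) v) =
        some (shiftEl (Multiplicative.toAdd a) (shiftEl (Multiplicative.toAdd b) v))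
      exact congrArg some (ConvEl.ext' (by simp; omega) (by simp; omega) rfl))
/-- For `n ≥ 2`, the monoid of injective endomorphisms of `I_ω^n(conv)` under composition is
isomorphic to the additive monoid `(ω, +)`. -/
theorem convSgp_injEnd_iso_nat (n : ℕ) (hn : 2 ≤ n) :
    Nonempty (InjEndConv n ≃* Multiplicative ℕ) := by
  have h1n : 1 ≤ n := by omega
  have hbij : Function.Bijective (shiftHom n) := by
    constructor
    · intro a b hab
      have h1 := congrFun (congrArg Subtype.val hab) (some (epsEl n h1n 0))
      simp only [shiftHom, MonoidHom.coe_mk, OneHom.coe_mk, shiftEndo,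
        shiftFun_some, Option.some.injEq] at h1
      change some (shiftEl (Multiplicative.toAdd a) (epsEl n h1n 0)) =
        some (shiftEl (Multiplicative.toAdd b) (epsEl n h1n 0)) at h1
      simp only [Option.some.injEq] at h1
      have h2 := congrArg ConvEl.i h1
      simp only [shiftEl_i, epsEl_i] at h2
      have h3 : Multiplicative.toAdd a = Multiplicative.toAdd b := by omega
      exact Multiplicative.toAdd.injective h3
    · intro f
      obtain ⟨c, hc⟩ := classify_endo hn f.1 f.2.1 f.2.2
      exact ⟨Multiplicative.ofAdd c, Subtype.ext hc.symm⟩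
  exact ⟨(MulEquiv.ofBijective (shiftHom n) hbij).symm⟩
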